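/- Let A be an n×n real matrix such that −A is exponentially stable (all eigenvalues of A have positive real part), and B an n×m real matrix such that there exists β > 0 with ∫_0^∞ ‖Bᵀ e^{−tAᵀ} y‖² dt ≥ β ‖y‖² for all y ∈ ℝⁿ. Then there exists a symmetric positive semidefinite matrix P solving the degenerate algebraic Riccati equation Aᵀ P + P A − P B Bᵀ P = 0 such that P is invertible and A − B Bᵀ P is exponentially stable (all eigenvalues have negative real part). -/

import Mathlib

/-!
The solution is `P = W⁻¹`, where `W = ∫₀^∞ e^{-tA} B Bᵀ e^{-tAᵀ} dt` is the controllability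
Gramian of `(-A, B)`, i.e. the observability Gramian of `(-Aᵀ, Bᵀ)`, whose quadratic form is the
output energy `∫₀^∞ ‖Bᵀ e^{-tAᵀ} y‖² dt`. The controllability inequality makes `W` positive
definite. The output pairing `⟨Bᵀ e^{-tAᵀ} y, Bᵀ e^{-tAᵀ} z⟩` and its derivative are integrable,
so it tends to `0` at infinity, and integrating the derivative gives the Lyapunov equation
`A W + W Aᵀ = B Bᵀ`. Conjugating it by `P` is the Riccati equation, and it also shows
`A - B Bᵀ P = -W Aᵀ W⁻¹`, whose spectrum is `-σ(A)`, in the open left half-plane.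
-/

open MeasureTheory Matrix Set
open scoped Pointwise

theorem riccati_of_lyapunov {R : Type*} [Ring R] {a b c q p : R} (hqp : q * p = 1)
    (hpq : p * q = 1) (h : a * q + q * b = c) : b * p + p * a - p * c * p = 0 := by
  subst h
  simp only [mul_add, add_mul, ← mul_assoc, hpq, one_mul]
  simp only [mul_assoc, hqp, mul_one]
  abel

theorem spectrum_sub_mul_inv_of_lyapunov {𝕜 R : Type*} [CommRing 𝕜] [Ring R] [Algebra 𝕜 R]
    {a b c : R} (u : Rˣ) (h : a * u + u * b = c) :
    spectrum 𝕜 (a - c * ↑u⁻¹) = -spectrum 𝕜 b := by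
  have : a - c * ↑u⁻¹ = -(u * b * ↑u⁻¹) := by
    rw [← h, add_mul, mul_assoc a, Units.mul_inv, mul_one]
    abel
  rw [this, ← spectrum.neg_eq, spectrum.units_conjugate]

theorem Matrix.spectrum_transpose {ι R : Type*} [Fintype ι] [DecidableEq ι] [CommRing R]
    (M : Matrix ι ι R) : spectrum R Mᵀ = spectrum R M := by
  ext r
  simp [mem_spectrum_iff_not_isUnit_eval_charpoly, charpoly_transpose]

theorem Matrix.spectrum_map_sub_mul_inv_of_lyapunov {ι R S : Type*} [Fintype ι] [DecidableEq ι]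
    [CommRing R] [CommRing S] (f : R →+* S) {A C Q : Matrix ι ι R} (hQ : IsUnit Q)
    (h : A * Q + Q * Aᵀ = C) : spectrum S ((A - C * Q⁻¹).map f) = -spectrum S (A.map f) := by
  let u := (hQ.map f.mapMatrix).unit
  have hinv : ↑u⁻¹ = (Q⁻¹).map f :=
    Units.inv_eq_of_mul_eq_one_right <| by
      simp [u, ← Matrix.map_mul, mul_nonsing_inv Q ((isUnit_iff_isUnit_det Q).1 hQ)]
  have hlyap : A.map f * u + u * (A.map f)ᵀ = C.map f := by
    simp [u, ← h, ← transpose_map, Matrix.map_mul, Matrix.map_add]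
  rw [← spectrum_transpose (A.map f), ← spectrum_sub_mul_inv_of_lyapunov u hlyap, hinv]
  simp [Matrix.map_mul, Matrix.map_sub]

theorem HasDerivAt.dotProduct {ι 𝕜 : Type*} [Fintype ι] [NontriviallyNormedField 𝕜]
    {u v : 𝕜 → ι → 𝕜} {u' v' : ι → 𝕜} {t : 𝕜} (hu : HasDerivAt u u' t) (hv : HasDerivAt v v' t) :
    HasDerivAt (fun s => u s ⬝ᵥ v s) (u' ⬝ᵥ v t + u t ⬝ᵥ v') t := by
  unfold _root_.dotProduct
  rw [← Finset.sum_add_distrib]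
  exact HasDerivAt.fun_sum fun i _ => (hasDerivAt_pi.1 hu i).mul (hasDerivAt_pi.1 hv i)

theorem Matrix.hasDerivAt_exp_neg_smul {ι : Type*} [Fintype ι] [DecidableEq ι]
    (K : Matrix ι ι ℝ) (t : ℝ) :
    HasDerivAt (fun s : ℝ => NormedSpace.exp ((-s) • K)) (-(NormedSpace.exp ((-t) • K) * K)) t := by
  let _ := Matrix.linftyOpNormedRing (α := ℝ) (n := ι)
  let _ := Matrix.linftyOpNormedAlgebra (α := ℝ) (n := ι) (R := ℝ)
  have := (hasDerivAt_exp_smul_const K (-t)).scomp t (hasDerivAt_neg t)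
  simp only [Function.comp_def, neg_one_smul] at this
  exact this

theorem Matrix.dotProduct_transpose_mul_mulVec {ι κ R : Type*} [Fintype ι] [Fintype κ]
    [CommSemiring R] (G : Matrix κ ι R) (y z : ι → R) :
    y ⬝ᵥ ((Gᵀ * G) *ᵥ z) = (G *ᵥ y) ⬝ᵥ (G *ᵥ z) := by
  rw [← mulVec_mulVec, dotProduct_mulVec, vecMul_transpose]

theorem Matrix.dotProduct_of_integral_mulVec {α ι κ : Type*} [MeasurableSpace α] {μ : Measure α}
    [Fintype ι] [Fintype κ] {M : α → Matrix ι κ ℝ} (hM : ∀ i j, Integrable (fun t => M t i j) μ)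
    (y : ι → ℝ) (z : κ → ℝ) :
    y ⬝ᵥ (of (fun i j => ∫ t, M t i j ∂μ) *ᵥ z) = ∫ t, y ⬝ᵥ (M t *ᵥ z) ∂μ := by
  simp only [dotProduct, mulVec, of_apply, Finset.mul_sum]
  rw [integral_finsetSum _ fun i _ => integrable_finsetSum _ fun j _ =>
    ((hM i j).mul_const _).const_mul _]
  refine Finset.sum_congr rfl fun i _ => ?_
  rw [integral_finsetSum _ fun j _ => ((hM i j).mul_const _).const_mul _]
  refine Finset.sum_congr rfl fun j _ => ?_
  rw [integral_const_mul, integral_mul_const]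

theorem Matrix.ext_of_dotProduct_mulVec {ι κ R : Type*} [Fintype ι] [Fintype κ] [DecidableEq ι]
    [DecidableEq κ] [CommSemiring R] {M N : Matrix ι κ R}
    (h : ∀ y z, y ⬝ᵥ (M *ᵥ z) = y ⬝ᵥ (N *ᵥ z)) : M = N := by
  ext i j
  simpa using h (Pi.single i 1) (Pi.single j 1)

section Observability

variable {ι κ : Type*} [Fintype ι] [DecidableEq ι] (K : Matrix ι ι ℝ) (D : Matrix κ ι ℝ)

noncomputable def observation (y : ι → ℝ) (t : ℝ) : κ → ℝ :=
  D *ᵥ (NormedSpace.exp ((-t) • K) *ᵥ y)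

theorem observation_add (y z : ι → ℝ) (t : ℝ) :
    observation K D (y + z) t = observation K D y t + observation K D z t := by
  simp only [observation, mulVec_add]

theorem observation_zero_time (y : ι → ℝ) : observation K D y 0 = D *ᵥ y := by
  simp [observation]

variable [Fintype κ]

noncomputable def observabilityGramian : Matrix ι ι ℝ :=
  of fun i j => ∫ t in Ioi (0 : ℝ),
    ((D * NormedSpace.exp ((-t) • K))ᵀ * (D * NormedSpace.exp ((-t) • K))) i j

theorem hasDerivAt_observation (y : ι → ℝ) (t : ℝ) :
    HasDerivAt (observation K D y) (-observation K D (K *ᵥ y) t) t := by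
  let _ := Matrix.linftyOpNormedAddCommGroup (α := ℝ) (m := ι) (n := ι)
  let _ := Matrix.linftyOpNormedSpace (R := ℝ) (m := ι) (n := ι) (α := ℝ)
  let L : Matrix ι ι ℝ →L[ℝ] κ → ℝ :=
    LinearMap.toContinuousLinearMap (D.mulVecLin ∘ₗ (mulVecBilin ℝ ℝ).flip y)
  refine (L.hasFDerivAt.comp_hasDerivAt t (hasDerivAt_exp_neg_smul K t)).congr_deriv ?_
  change D *ᵥ (-(NormedSpace.exp ((-t) • K) * K) *ᵥ y) = _
  simp only [observation, neg_mulVec, mulVec_neg, mulVec_mulVec]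

variable {K D}

/-- Lean's integral of a non-integrable function is `0`, so a positive lower bound on the
output energy forces its integrability. -/
theorem integrableOn_observation_energy {β : ℝ} (hβ : 0 < β)
    (hobs : ∀ y, β * (y ⬝ᵥ y) ≤ ∫ t in Ioi 0, observation K D y t ⬝ᵥ observation K D y t)
    (y : ι → ℝ) :
    IntegrableOn (fun t => observation K D y t ⬝ᵥ observation K D y t) (Ioi 0) := by
  rcases eq_or_ne y 0 with rfl | hy
  · simp [observation]
  refine Integrable.of_integral_ne_zero (ne_of_gt (lt_of_lt_of_le ?_ (hobs y)))
  exact mul_pos hβ (by simpa using dotProduct_self_star_pos_iff.2 hy)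

section FiniteEnergy

variable (hE : ∀ y, IntegrableOn (fun t => observation K D y t ⬝ᵥ observation K D y t) (Ioi 0))
include hE

theorem integrableOn_observation_dotProduct (y z : ι → ℝ) :
    IntegrableOn (fun t => observation K D y t ⬝ᵥ observation K D z t) (Ioi 0) := by
  refine IntegrableOn.congr_fun ((((hE (y + z)).sub (hE y)).sub (hE z)).div_const 2)
    (fun t _ => ?_) measurableSet_Ioi
  simp only [Pi.sub_apply, observation_add, add_dotProduct, dotProduct_add]
  rw [dotProduct_comm (observation K D z t) (observation K D y t)]
  ring

theorem integral_observation_lyapunov (y z : ι → ℝ) :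
    ∫ t in Ioi 0, (observation K D (K *ᵥ y) t ⬝ᵥ observation K D z t +
      observation K D y t ⬝ᵥ observation K D (K *ᵥ z) t) = (D *ᵥ y) ⬝ᵥ (D *ᵥ z) := by
  have hderiv : ∀ t, HasDerivAt (fun s => observation K D y s ⬝ᵥ observation K D z s)
      (-(observation K D (K *ᵥ y) t ⬝ᵥ observation K D z t +
        observation K D y t ⬝ᵥ observation K D (K *ᵥ z) t)) t := fun t =>
    ((hasDerivAt_observation K D y t).dotProduct (hasDerivAt_observation K D z t)).congr_deriv
      (by simp only [neg_dotProduct, dotProduct_neg, neg_add])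
  have hint := ((integrableOn_observation_dotProduct hE (K *ᵥ y) z).add
    (integrableOn_observation_dotProduct hE y (K *ᵥ z))).neg
  have hlim := tendsto_zero_of_hasDerivAt_of_integrableOn_Ioi (fun t _ => hderiv t) hint
    (integrableOn_observation_dotProduct hE y z)
  have := integral_Ioi_of_hasDerivAt_of_tendsto' (fun t _ => hderiv t) hint hlim
  rw [integral_neg, observation_zero_time, observation_zero_time] at this
  linarith

theorem dotProduct_observabilityGramian_mulVec (y z : ι → ℝ) :
    y ⬝ᵥ (observabilityGramian K D *ᵥ z) =
      ∫ t in Ioi 0, observation K D y t ⬝ᵥ observation K D z t := by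
  have hG : ∀ t (y z : ι → ℝ), y ⬝ᵥ (((D * NormedSpace.exp ((-t) • K))ᵀ *
      (D * NormedSpace.exp ((-t) • K))) *ᵥ z) = observation K D y t ⬝ᵥ observation K D z t := by
    intro t y z
    rw [dotProduct_transpose_mul_mulVec, observation, observation, mulVec_mulVec, mulVec_mulVec]
  rw [observabilityGramian, dotProduct_of_integral_mulVec]
  · simp_rw [hG]
  · intro i j
    refine (integrableOn_observation_dotProduct hE (Pi.single i 1) (Pi.single j 1)).congr_fun
      (fun t _ => ?_) measurableSet_Ioi
    simp [← hG]

theorem observabilityGramian_lyapunov :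
    Kᵀ * observabilityGramian K D + observabilityGramian K D * K = Dᵀ * D := by
  refine ext_of_dotProduct_mulVec fun y z => ?_
  rw [add_mulVec, dotProduct_add, ← mulVec_mulVec, dotProduct_mulVec, vecMul_transpose,
    ← mulVec_mulVec, dotProduct_observabilityGramian_mulVec hE,
    dotProduct_observabilityGramian_mulVec hE, ← integral_add
      (integrableOn_observation_dotProduct hE _ _) (integrableOn_observation_dotProduct hE _ _),
    integral_observation_lyapunov hE, dotProduct_transpose_mul_mulVec]

end FiniteEnergy

theorem observabilityGramian_posDef {β : ℝ} (hβ : 0 < β)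
    (hobs : ∀ y, β * (y ⬝ᵥ y) ≤ ∫ t in Ioi 0, observation K D y t ⬝ᵥ observation K D y t) :
    (observabilityGramian K D).PosDef := by
  have hE := integrableOn_observation_energy hβ hobs
  have hentry : ∀ i j, observabilityGramian K D i j = ∫ t in Ioi 0,
      observation K D (Pi.single i 1) t ⬝ᵥ observation K D (Pi.single j 1) t := fun i j => by
    rw [← dotProduct_observabilityGramian_mulVec hE]
    simp
  refine .of_dotProduct_mulVec_pos (.ext fun i j => ?_) fun x hx => ?_
  · simp only [star_trivial, hentry, dotProduct_comm]
  · rw [star_trivial, dotProduct_observabilityGramian_mulVec hE]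
    exact (mul_pos hβ (by simpa using dotProduct_self_star_pos_iff.2 hx)).trans_le (hobs x)

end Observability

/-- finite-dimensional Riccati theorem: if `−A` is exponentially stable
(all eigenvalues of `A` have positive real part) and `(−A, B)` is exactly controllable
(the observability-type integral inequality holds), then the degenerate algebraic
Riccati equation `Aᵀ P + P A − P B Bᵀ P = 0` admits a symmetric positive semidefinite,
invertible solution `P` with `A − B Bᵀ P` exponentially stable. -/
theorem degenerate_riccati_finite_dim {n m : ℕ}
    (A : Matrix (Fin n) (Fin n) ℝ) (B : Matrix (Fin n) (Fin m) ℝ)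
    (hA : ∀ μ ∈ spectrum ℂ (A.map (Complex.ofReal · )), 0 < μ.re)
    (β : ℝ) (hβ : 0 < β)
    (hctrl : ∀ y : Fin n → ℝ,
      β * (∑ j, (y j) ^ 2) ≤
        ∫ t in Set.Ioi (0 : ℝ),
          ∑ i, ((Bᵀ *ᵥ (NormedSpace.exp ((-t) • Aᵀ) *ᵥ y)) i) ^ 2) :
    ∃ P : Matrix (Fin n) (Fin n) ℝ,
      P.PosSemidef ∧
      Aᵀ * P + P * A - P * B * Bᵀ * P = 0 ∧
      IsUnit P ∧
      ∀ μ ∈ spectrum ℂ ((A - B * Bᵀ * P).map (Complex.ofReal · )), μ.re < 0 := by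
  have hobs : ∀ y, β * (y ⬝ᵥ y) ≤
      ∫ t in Ioi 0, observation Aᵀ Bᵀ y t ⬝ᵥ observation Aᵀ Bᵀ y t := by
    simpa only [observation, dotProduct, ← sq] using hctrl
  set W := observabilityGramian Aᵀ Bᵀ
  have hW : W.PosDef := observabilityGramian_posDef hβ hobs
  have hlyap : A * W + W * Aᵀ = B * Bᵀ := by
    simpa using observabilityGramian_lyapunov (integrableOn_observation_energy hβ hobs)
  have hdet := (isUnit_iff_isUnit_det W).1 hW.isUnit
  refine ⟨W⁻¹, hW.inv.posSemidef, ?_, hW.inv.isUnit, fun μ hμ => ?_⟩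
  · simpa only [Matrix.mul_assoc] using
      riccati_of_lyapunov (mul_nonsing_inv W hdet) (nonsing_inv_mul W hdet) hlyap
  · have hμ' : μ ∈ -spectrum ℂ (A.map Complex.ofRealHom) := by
      rwa [← spectrum_map_sub_mul_inv_of_lyapunov Complex.ofRealHom hW.isUnit hlyap]
    simpa using hA (-μ) hμ'
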